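/- arXiv:2210.14033 — 3 statements merged into one kernel-verified Lean document; each statement's English description precedes it below -/
import Mathlib

section
/- Interpolation of generalised Fisher informations: Let P ∈ ℝ^{d×d} be symmetric positive definite, let f be measurable with f > 0 a.e., and let g ∈ H¹_loc(ℝ^d) be such that 𝓘₁^P(f,g|f_∞) < ∞ and I₂^P(g|f_∞) < ∞. Then for every 1 < p < 2: 𝓘_p^P(f,g|f_∞) ≤ (p−1)^{−(p−1)} (2−p)^{−(2−p)} · 𝓘₁^P(f,g|f_∞)^{2−p} · I₂^P(g|f_∞)^{p−1}. -/
open MeasureTheory Matrix Real Filter Set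
open scoped ENNReal

noncomputable section

/-- Squared Euclidean norm on `Fin d → ℝ`. -/
def sqnorm {d : ℕ} (x : Fin d → ℝ) : ℝ := ∑ i, x i ^ 2

/-- The standard Gaussian density `f_∞` on `ℝ^d`. -/
def gaussF (d : ℕ) (x : Fin d → ℝ) : ℝ :=
  (2 * Real.pi) ^ (-(d : ℝ) / 2) * Real.exp (-sqnorm x / 2)

/-- The gradient of a scalar function, via Fréchet partial derivatives. -/
def grad {d : ℕ} (h : (Fin d → ℝ) → ℝ) (x : Fin d → ℝ) : Fin d → ℝ :=
  fun i => fderiv ℝ h x (Pi.single i 1)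

/-- The divergence of a vector field. -/
def diverg {d : ℕ} (F : (Fin d → ℝ) → Fin d → ℝ) (x : Fin d → ℝ) : ℝ :=
  ∑ i, fderiv ℝ (fun y => F y i) x (Pi.single i 1)

/-- The symmetric part `(C + Cᵀ)/2` of a matrix. -/
def symPart {d : ℕ} (C : Matrix (Fin d) (Fin d) ℝ) : Matrix (Fin d) (Fin d) ℝ :=
  (2⁻¹ : ℝ) • (C + Cᵀ)

/-- `C` is positive stable: every complex eigenvalue has positive real part. -/
def PosStable {d : ℕ} (C : Matrix (Fin d) (Fin d) ℝ) : Prop :=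
  ∀ z ∈ spectrum ℂ (C.map Complex.ofReal), 0 < z.re

/-- No nonzero subspace of `ker D` (with `D = (C+Cᵀ)/2`) is invariant under `Cᵀ`. -/
def NoKerInvariant {d : ℕ} (C : Matrix (Fin d) (Fin d) ℝ) : Prop :=
  ∀ U : Submodule ℝ (Fin d → ℝ), U ≤ LinearMap.ker (symPart C).mulVecLin →
    (∀ x ∈ U, Cᵀ.mulVec x ∈ U) → U = ⊥

/-- The covariance matrix `W(t) = 2∫₀ᵗ e^{-Cs} D e^{-Cᵀ s} ds`. -/
def Wmat {d : ℕ} (C : Matrix (Fin d) (Fin d) ℝ) (t : ℝ) : Matrix (Fin d) (Fin d) ℝ :=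
  Matrix.of fun i j =>
    2 * ∫ s in Set.Ioc (0 : ℝ) t,
      (NormedSpace.exp (-(s • C)) * symPart C * NormedSpace.exp (-(s • Cᵀ))) i j

/-- The explicit solution of the Fokker–Planck equation `∂ₜ f = div (D ∇f + C x f)`. -/
def FPsol {d : ℕ} (C : Matrix (Fin d) (Fin d) ℝ) (f₀ : (Fin d → ℝ) → ℝ) (t : ℝ)
    (x : Fin d → ℝ) : ℝ :=
  if t = 0 then f₀ x
  else
    (2 * Real.pi) ^ (-(d : ℝ) / 2) * (Real.sqrt (Wmat C t).det)⁻¹ *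
      ∫ y : Fin d → ℝ,
        Real.exp (-(1 / 2) *
          ((x - NormedSpace.exp (-(t • C)) *ᵥ y) ⬝ᵥ
            ((Wmat C t)⁻¹ *ᵥ (x - NormedSpace.exp (-(t • C)) *ᵥ y)))) * f₀ y

/-- The `p`-entropy `e_p(h|f_∞)`, as an extended real number. -/
def entP {d : ℕ} (p : ℝ) (h : (Fin d → ℝ) → ℝ) : ℝ≥0∞ :=
  ENNReal.ofReal (1 / (p * (p - 1))) *
    ∫⁻ x, ENNReal.ofReal
      (((h x / gaussF d x) ^ p - p * (h x / gaussF d x - 1) - 1) * gaussF d x)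

/-- The quadratic entropy `e₂(h|f_∞)` for signed `h`, as an extended real number. -/
def ent2 {d : ℕ} (h : (Fin d → ℝ) → ℝ) : ℝ≥0∞ :=
  ENNReal.ofReal (1 / 2) *
    ∫⁻ x, ENNReal.ofReal ((h x / gaussF d x - 1) ^ 2 * gaussF d x)

/-- The squared weighted norm `‖g‖²_{L²(ℝ^d, f_∞^{-1})}`. -/
def L2w {d : ℕ} (g : (Fin d → ℝ) → ℝ) : ℝ≥0∞ :=
  ∫⁻ x, ENNReal.ofReal ((g x) ^ 2 / gaussF d x)

/-- The generalised ψ-Fisher information `𝓘_ψ^P(f,g|f_∞)`, specified via `ψ''`. -/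
def genFisher {d : ℕ} (ψ'' : ℝ → ℝ) (P : Matrix (Fin d) (Fin d) ℝ)
    (f g : (Fin d → ℝ) → ℝ) : ℝ≥0∞ :=
  ∫⁻ x, ENNReal.ofReal
    (ψ'' (f x / gaussF d x) *
      (grad (fun y => g y / gaussF d y) x ⬝ᵥ (P *ᵥ grad (fun y => g y / gaussF d y) x)) *
      gaussF d x)

/-- The generalised `p`-Fisher information `𝓘_p^P(f,g|f_∞)` (here `ψ_p''(y) = y^{p-2}`). -/
def genFisherP {d : ℕ} (p : ℝ) (P : Matrix (Fin d) (Fin d) ℝ)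
    (f g : (Fin d → ℝ) → ℝ) : ℝ≥0∞ :=
  genFisher (fun y => y ^ (p - 2)) P f g

/-- The 2-Fisher information `I₂^P(g|f_∞)`. -/
def fisher2 {d : ℕ} (P : Matrix (Fin d) (Fin d) ℝ) (g : (Fin d → ℝ) → ℝ) : ℝ≥0∞ :=
  ∫⁻ x, ENNReal.ofReal
    ((grad (fun y => g y / gaussF d y) x ⬝ᵥ (P *ᵥ grad (fun y => g y / gaussF d y) x)) *
      gaussF d x)

/-- The `p`-Fisher information `I_p^P(h|f_∞)` of a single function. -/
def fisherP {d : ℕ} (p : ℝ) (P : Matrix (Fin d) (Fin d) ℝ) (h : (Fin d → ℝ) → ℝ) : ℝ≥0∞ :=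
  genFisherP p P h h

/-- The size of the largest Jordan block of `A` associated with `z`
(the index of `z`): the smallest `k` at which the kernels of `(A - z)^k` stabilise. -/
def blockIndex {d : ℕ} (A : Matrix (Fin d) (Fin d) ℂ) (z : ℂ) : ℕ :=
  sInf {k : ℕ |
    LinearMap.ker (((A - z • (1 : Matrix (Fin d) (Fin d) ℂ)) ^ k).mulVecLin) =
      LinearMap.ker (((A - z • (1 : Matrix (Fin d) (Fin d) ℂ)) ^ (k + 1)).mulVecLin)}

/-- A generating function for an admissible relative entropy. -/
structure IsAdmissibleEntropy (ψ : ℝ → ℝ) : Prop where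
  cont : ContinuousOn ψ (Set.Ici 0)
  smooth : ContDiffOn ℝ 4 ψ (Set.Ioi 0)
  map_one : ψ 1 = 0
  deriv_one : deriv ψ 1 = 0
  second_pos : ∀ y > 0, 0 < iteratedDeriv 2 ψ y
  bakry_emery : ∀ y > 0,
    (iteratedDeriv 3 ψ y) ^ 2 ≤ 1 / 2 * iteratedDeriv 2 ψ y * iteratedDeriv 4 ψ y

/-- The projection `f₁` of `h` onto `V₁ = span{x_i f_∞}` in `L²(ℝ^d, f_∞^{-1})`. -/
def projV1 {d : ℕ} (h : (Fin d → ℝ) → ℝ) (x : Fin d → ℝ) : ℝ :=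
  ∑ i, (∫ y : Fin d → ℝ, y i * h y) * (x i * gaussF d x)

/-- Interpolation of generalised Fisher informations. -/
theorem genFisher_interpolation (d : ℕ) (hd : 0 < d)
    (P : Matrix (Fin d) (Fin d) ℝ) (hP : P.PosDef)
    (f g : (Fin d → ℝ) → ℝ) (hfmeas : AEMeasurable f)
    (hfpos : ∀ᵐ x ∂(volume : Measure (Fin d → ℝ)), 0 < f x)
    (h1fin : genFisherP 1 P f g < ⊤) (h2fin : fisher2 P g < ⊤) :
    ∀ p : ℝ, 1 < p → p < 2 →
      genFisherP p P f g ≤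
        ENNReal.ofReal (1 / ((p - 1) ^ (p - 1) * (2 - p) ^ (2 - p))) *
          genFisherP 1 P f g ^ (2 - p) * fisher2 P g ^ (p - 1) := by
  intro p hp1 hp2
  set u : (Fin d → ℝ) → ℝ := fun y => g y / gaussF d y with hu
  set Q : (Fin d → ℝ) → ℝ := fun x => grad u x ⬝ᵥ (P *ᵥ grad u x) with hQdef
  have hGpos : ∀ x, 0 < gaussF d x := by
    intro x
    exact mul_pos (Real.rpow_pos_of_pos (by positivity) _) (Real.exp_pos _)
  have hQnn : ∀ x, 0 ≤ Q x := by
    intro x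
    have := hP.posSemidef.dotProduct_mulVec_nonneg (grad u x)
    simpa using this
  have hQm : Measurable Q := by
    have hg : ∀ i, Measurable fun x => grad u x i := fun i =>
      measurable_fderiv_apply_const ℝ u (Pi.single i 1)
    simp only [hQdef, dotProduct, Matrix.mulVec, dotProduct]
    exact Finset.measurable_sum _ fun i _ =>
      (hg i).mul (Finset.measurable_sum _ fun j _ => measurable_const.mul (hg j))
  have hGm : Measurable (gaussF d) := by
    have : Continuous (gaussF d) := by
      unfold gaussF sqnorm
      exact continuous_const.mul ((continuous_finset_sum _ fun i _ =>
        (continuous_apply i).pow 2).neg.div_const 2).rexp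
    exact this.measurable
  set A : (Fin d → ℝ) → ℝ≥0∞ := fun x =>
    ENNReal.ofReal ((f x / gaussF d x) ^ ((1:ℝ) - 2) * Q x * gaussF d x) with hA
  set B : (Fin d → ℝ) → ℝ≥0∞ := fun x => ENNReal.ofReal (Q x * gaussF d x) with hB
  have hAm : AEMeasurable A := by
    apply ENNReal.measurable_ofReal.comp_aemeasurable
    exact (((hfmeas.div hGm.aemeasurable).pow aemeasurable_const).mul
      hQm.aemeasurable).mul hGm.aemeasurable
  have hBm : AEMeasurable B :=
    ENNReal.measurable_ofReal.comp_aemeasurable (hQm.mul hGm).aemeasurable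
  have hr : (0:ℝ) < 2 - p := by linarith
  have hs : (0:ℝ) < p - 1 := by linarith
  -- pointwise bound
  have hptwise : ∀ᵐ x ∂(volume : Measure (Fin d → ℝ)),
      ENNReal.ofReal ((f x / gaussF d x) ^ (p - 2) * Q x * gaussF d x) ≤
        A x ^ (2 - p) * B x ^ (p - 1) := by
    filter_upwards [hfpos] with x hfx
    set t := f x / gaussF d x with ht
    have htpos : 0 < t := div_pos hfx (hGpos x)
    rcases eq_or_lt_of_le (hQnn x) with hq0 | hqpos
    · simp [hA, hB, ← hq0]
    · have hqG : 0 < Q x * gaussF d x := mul_pos hqpos (hGpos x)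
      have key : t ^ (p - 2) * Q x * gaussF d x =
          (t ^ ((1:ℝ) - 2) * Q x * gaussF d x) ^ (2 - p) * (Q x * gaussF d x) ^ (p - 1) := by
        have h1 : t ^ ((1:ℝ) - 2) * Q x * gaussF d x = t⁻¹ * (Q x * gaussF d x) := by
          rw [show ((1:ℝ) - 2) = -1 by norm_num, Real.rpow_neg_one, mul_assoc]
        rw [h1, Real.mul_rpow (inv_nonneg.2 htpos.le) hqG.le,
          Real.inv_rpow htpos.le, ← Real.rpow_neg htpos.le, mul_assoc,
          mul_assoc, ← Real.rpow_add hqG,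
          show (2 - p) + (p - 1) = (1:ℝ) by ring, Real.rpow_one,
          show -(2 - p) = p - 2 by ring]
      have hbase : 0 ≤ t ^ ((1:ℝ) - 2) * Q x * gaussF d x :=
        mul_nonneg (mul_nonneg (Real.rpow_nonneg htpos.le _) (hQnn x)) (hGpos x).le
      rw [key, hA, hB]
      rw [ENNReal.ofReal_mul (Real.rpow_nonneg hbase _),
        ENNReal.ofReal_rpow_of_nonneg hbase hr.le,
        ENNReal.ofReal_rpow_of_nonneg hqG.le hs.le]
  have step1 : genFisherP p P f g ≤ ∫⁻ x, (fun x => A x ^ (2 - p)) x * (fun x => B x ^ (p - 1)) x := by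
    refine le_trans (lintegral_mono_ae hptwise) ?_
    simp
  -- Hölder
  have hconj : (1 / (2 - p)).HolderConjugate (1 / (p - 1)) := by
    rw [Real.holderConjugate_iff]
    constructor
    · rw [lt_div_iff₀ hr]; linarith
    · rw [one_div, one_div, inv_inv, inv_inv]; ring
  have holder := ENNReal.lintegral_mul_le_Lp_mul_Lq (volume : Measure (Fin d → ℝ)) hconj
    (hAm.pow_const (2 - p)) (hBm.pow_const (p - 1))
  have hA2 : (∫⁻ x, (A x ^ (2 - p)) ^ (1 / (2 - p))) = genFisherP 1 P f g := by
    have : ∀ x, (A x ^ (2 - p)) ^ (1 / (2 - p)) = A x := by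
      intro x
      rw [← ENNReal.rpow_mul, mul_one_div, div_self hr.ne', ENNReal.rpow_one]
    simp only [this]
    rfl
  have hB2 : (∫⁻ x, (B x ^ (p - 1)) ^ (1 / (p - 1))) = fisher2 P g := by
    have : ∀ x, (B x ^ (p - 1)) ^ (1 / (p - 1)) = B x := by
      intro x
      rw [← ENNReal.rpow_mul, mul_one_div, div_self hs.ne', ENNReal.rpow_one]
    simp only [this]
    rfl
  have hexp1 : 1 / (1 / (2 - p)) = 2 - p := one_div_one_div _
  have hexp2 : 1 / (1 / (p - 1)) = p - 1 := one_div_one_div _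
  rw [hexp1, hexp2, hA2, hB2] at holder
  have main : genFisherP p P f g ≤ genFisherP 1 P f g ^ (2 - p) * fisher2 P g ^ (p - 1) := by
    refine step1.trans ?_
    simpa using holder
  -- constant ≥ 1
  have hc : (1:ℝ≥0∞) ≤ ENNReal.ofReal (1 / ((p - 1) ^ (p - 1) * (2 - p) ^ (2 - p))) := by
    rw [ENNReal.one_le_ofReal]
    rw [le_div_iff₀ (by positivity)]
    rw [one_mul]
    calc (p - 1) ^ (p - 1) * (2 - p) ^ (2 - p)
        ≤ 1 * 1 := by
          apply mul_le_mul
          · exact Real.rpow_le_one hs.le (by linarith) hs.le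
          · exact Real.rpow_le_one hr.le (by linarith) hr.le
          · positivity
          · norm_num
      _ = 1 := by norm_num
  calc genFisherP p P f g ≤ genFisherP 1 P f g ^ (2 - p) * fisher2 P g ^ (p - 1) := main
    _ ≤ ENNReal.ofReal (1 / ((p - 1) ^ (p - 1) * (2 - p) ^ (2 - p))) *
          (genFisherP 1 P f g ^ (2 - p) * fisher2 P g ^ (p - 1)) := le_mul_of_one_le_left (zero_le (a := _)) hc
    _ = _ := by rw [mul_assoc]

end
end

section
/- Exponential moments are controlled by p-entropies: Let 1 < p ≤ 2 and f ∈ L¹(ℝ^d) with e_p(|f| | f_∞) < ∞. Then ∫_{ℝ^d} e^{(p−1)|x|²/(2(2p−1))} |f(x)| dx ≤ ((2p−1)/(p−1))^{d(p−1)/(2p)} · (2p)^{1/(p−1)} · [p(p−1) e_p(|f| | f_∞) + 1]^{1/p}. Moreover, if ∫_{ℝ^d} |f(x)| dx = 1, then the sharper bound holds: ∫_{ℝ^d} e^{(p−1)|x|²/(2(2p−1))} |f(x)| dx ≤ ((2p−1)/(p−1))^{d(p−1)/(2p)} · [p(p−1) e_p(|f| | f_∞) + 1]^{1/p}. -/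
open MeasureTheory Matrix Real Filter Set
open scoped ENNReal

noncomputable section

lemma sqnorm_nonneg {d : ℕ} (x : Fin d → ℝ) : 0 ≤ sqnorm x :=
  Finset.sum_nonneg fun i _ => sq_nonneg _

lemma continuous_sqnorm {d : ℕ} : Continuous (sqnorm (d := d)) := by
  unfold sqnorm
  exact continuous_finset_sum _ fun i _ => ((continuous_apply i).pow 2)

lemma gaussF_pos {d : ℕ} (x : Fin d → ℝ) : 0 < gaussF d x :=
  mul_pos (rpow_pos_of_pos (by positivity) _) (exp_pos _)

lemma continuous_gaussF {d : ℕ} : Continuous (gaussF d) :=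
  continuous_const.mul ((continuous_sqnorm.neg.div_const 2).rexp)

lemma integrable_exp_neg_mul_sqnorm {d : ℕ} {b : ℝ} (hb : 0 < b) :
    Integrable (fun x : Fin d → ℝ => Real.exp (-b * sqnorm x)) := by
  have : (fun x : Fin d → ℝ => Real.exp (-b * sqnorm x)) =
      fun x => ∏ i, Real.exp (-b * (x i) ^ 2) := by
    funext x
    rw [← Real.exp_sum]
    congr 1
    rw [sqnorm, Finset.mul_sum]
  rw [this]
  exact Integrable.fintype_prod (fun _ => integrable_exp_neg_mul_sq hb)

lemma integral_exp_neg_mul_sqnorm {d : ℕ} {b : ℝ} (hb : 0 < b) :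
    ∫ x : Fin d → ℝ, Real.exp (-b * sqnorm x) = (π / b) ^ ((d : ℝ) / 2) := by
  have : (fun x : Fin d → ℝ => Real.exp (-b * sqnorm x)) =
      fun x => ∏ i, Real.exp (-b * (x i) ^ 2) := by
    funext x
    rw [← Real.exp_sum]
    congr 1
    rw [sqnorm, Finset.mul_sum]
  rw [this, volume_pi, integral_fintype_prod_eq_pow (ι := Fin d) (fun t => Real.exp (-b * t ^ 2)),
    integral_gaussian, Fintype.card_fin]
  rw [Real.sqrt_eq_rpow, ← Real.rpow_natCast ((π / b) ^ (1/2 : ℝ)) d, ← Real.rpow_mul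
    (by positivity)]
  ring_nf

lemma integral_exp_mul_sqnorm_gaussF {d : ℕ} {c : ℝ} (hc : c < 1 / 2) :
    ∫ x : Fin d → ℝ, Real.exp (c * sqnorm x) * gaussF d x = (1 - 2 * c) ^ (-(d : ℝ) / 2) := by
  have hb : 0 < (1 - 2 * c) / 2 := by linarith
  have heq : (fun x : Fin d → ℝ => Real.exp (c * sqnorm x) * gaussF d x) =
      fun x => (2 * π) ^ (-(d : ℝ) / 2) * Real.exp (-((1 - 2*c)/2) * sqnorm x) := by
    funext x
    rw [gaussF, mul_left_comm, ← Real.exp_add]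
    congr 2
    ring
  have h2π : (0:ℝ) < 2 * π := by positivity
  have hb2 : (0:ℝ) < 1 - 2 * c := by linarith
  rw [heq, integral_const_mul, integral_exp_neg_mul_sqnorm hb]
  have : π / ((1 - 2 * c) / 2) = 2 * π / (1 - 2 * c) := by field_simp
  rw [this, Real.div_rpow h2π.le hb2.le, neg_div, Real.rpow_neg hb2.le ((d:ℝ)/2),
    ← mul_div_assoc, ← Real.rpow_add h2π]
  simp

lemma integrable_exp_mul_sqnorm_gaussF {d : ℕ} {c : ℝ} (hc : c < 1 / 2) :
    Integrable (fun x : Fin d → ℝ => Real.exp (c * sqnorm x) * gaussF d x) := by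
  have hb : 0 < (1 - 2 * c) / 2 := by linarith
  have heq : (fun x : Fin d → ℝ => Real.exp (c * sqnorm x) * gaussF d x) =
      fun x => (2 * π) ^ (-(d : ℝ) / 2) * Real.exp (-((1 - 2*c)/2) * sqnorm x) := by
    funext x
    rw [gaussF, mul_left_comm, ← Real.exp_add]
    congr 2
    ring
  rw [heq]
  exact (integrable_exp_neg_mul_sqnorm hb).const_mul _

lemma bernoulli_aux {p y : ℝ} (hp : 1 ≤ p) (hy : 0 ≤ y) :
    0 ≤ y ^ p - p * (y - 1) - 1 := by
  have h := one_add_mul_self_le_rpow_one_add (s := y - 1) (by linarith) hp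
  have : (1 : ℝ) + (y - 1) = y := by ring
  rw [this] at h
  linarith

lemma key_arith {p E m T : ℝ} (hp1 : 1 < p) (hE : 0 ≤ E) (hm : 0 ≤ m)
    (hT : T = E + p * m - (p - 1)) (hT0 : 0 ≤ T) (hmT : m ≤ T ^ (1/p : ℝ)) :
    T ≤ (2 * p) ^ (p / (p - 1)) * (E + 1) := by
  have hp0 : 0 < p := by linarith
  set K := (2 * p) ^ (p / (p - 1)) with hK
  have hKK : 2 * p ≤ K := by
    calc 2 * p = (2 * p) ^ (1:ℝ) := (Real.rpow_one _).symm
    _ ≤ K := Real.rpow_le_rpow_of_exponent_le (by linarith)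
        (by rw [le_div_iff₀ (by linarith)]; linarith)
  by_cases hTK : T ≤ K
  · nlinarith
  · push_neg at hTK
    have hK0 : (0:ℝ) < K := by linarith
    have h1 : K ^ ((p-1)/p) ≤ T ^ ((p-1)/p) :=
      Real.rpow_le_rpow hK0.le hTK.le (div_nonneg (by linarith) hp0.le)
    have h2 : K ^ ((p-1)/p) = 2 * p := by
      rw [hK, ← Real.rpow_mul (by linarith),
        show p / (p-1) * ((p-1)/p) = 1 by
          rw [div_mul_div_comm, mul_comm p (p-1)]
          exact div_self (by nlinarith)]
      exact Real.rpow_one _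
    have h3 : 2 * p * T ^ (1/p : ℝ) ≤ T := by
      have h4 := mul_le_mul_of_nonneg_right (h2 ▸ h1) (Real.rpow_nonneg hT0 (1/p))
      calc 2 * p * T ^ (1/p:ℝ) ≤ T ^ ((p-1)/p) * T ^ (1/p:ℝ) := h4
        _ = T := by
          rw [← Real.rpow_add (by linarith : (0:ℝ) < T),
            show (p-1)/p + 1/p = 1 by field_simp; ring]
          exact Real.rpow_one _
    have hpm : p * m ≤ p * T ^ (1/p:ℝ) := mul_le_mul_of_nonneg_left hmT hp0.le
    nlinarith

lemma exp_moment_main (d : ℕ)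
    (p : ℝ) (hp1 : 1 < p) (hp2 : p ≤ 2)
    (f : (Fin d → ℝ) → ℝ) (hf : Integrable f)
    (hent : entP p (fun x => |f x|) < ⊤) :
    (∫⁻ x, ENNReal.ofReal
        (Real.exp ((p - 1) * sqnorm x / (2 * (2 * p - 1))) * |f x|)) ≤
      ENNReal.ofReal (((2 * p - 1) / (p - 1)) ^ ((d : ℝ) * (p - 1) / (2 * p)) *
        (2 * p) ^ (1 / (p - 1)) *
        (p * (p - 1) * (entP p (fun x => |f x|)).toReal + 1) ^ (1 / p)) ∧
    ((∫ x, |f x|) = 1 →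
      (∫⁻ x, ENNReal.ofReal
          (Real.exp ((p - 1) * sqnorm x / (2 * (2 * p - 1))) * |f x|)) ≤
        ENNReal.ofReal (((2 * p - 1) / (p - 1)) ^ ((d : ℝ) * (p - 1) / (2 * p)) *
          (p * (p - 1) * (entP p (fun x => |f x|)).toReal + 1) ^ (1 / p))) := by
  have hp0 : (0:ℝ) < p := by linarith
  have hp1' : (0:ℝ) < p - 1 := by linarith
  have h2p1 : (0:ℝ) < 2 * p - 1 := by linarith
  set G := gaussF d with hGdef
  have hGpos : ∀ x, 0 < G x := gaussF_pos
  have hGint : Integrable G := by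
    have h := integrable_exp_mul_sqnorm_gaussF (d := d) (c := 0) (by norm_num)
    simpa using h
  have hGone : ∫ x, G x = 1 := by
    have h := integral_exp_mul_sqnorm_gaussF (d := d) (c := 0) (by norm_num)
    simpa using h
  -- conjugate exponent
  set q : ℝ := p / (p - 1) with hqdef
  have hq0 : 0 < q := div_pos hp0 hp1'
  have hpq : p.HolderConjugate q := (Real.holderConjugate_iff_eq_conjExponent hp1).2 hqdef
  have hinv : 1/p + 1/q = 1 := by
    rw [one_div, one_div]; exact hpq.inv_add_inv_eq_one
  have h1q : 1/q = (p-1)/p := by rw [hqdef, one_div_div]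
  set lam : ℝ := (p - 1) / (2 * (2 * p - 1)) with hlamdef
  have hqlam : q * lam = p / (2 * (2 * p - 1)) := by
    rw [hqdef, hlamdef]; field_simp; try ring
  have hqlam_lt : q * lam < 1/2 := by
    rw [hqlam, div_lt_div_iff₀ (by linarith) two_pos]; linarith
  have hbase : 1 - 2 * (q * lam) = (p-1)/(2*p-1) := by
    rw [hqlam]; field_simp; try ring
  have hbase0 : 0 < 1 - 2 * (q * lam) := by rw [hbase]; positivity
  -- functions
  set y : (Fin d → ℝ) → ℝ := fun x => |f x| / G x with hydef
  have hy0 : ∀ x, 0 ≤ y x := fun x => div_nonneg (abs_nonneg _) (hGpos x).le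
  have hym : AEMeasurable y := (hf.abs.aemeasurable).div
    (continuous_gaussF.measurable.aemeasurable)
  set φ : (Fin d → ℝ) → ℝ := fun x => ((y x) ^ p - p * (y x - 1) - 1) * G x with hφdef
  have hφ0 : ∀ x, 0 ≤ φ x := fun x =>
    mul_nonneg (bernoulli_aux hp1.le (hy0 x)) (hGpos x).le
  have hφm : AEMeasurable φ := by
    have h1 : AEMeasurable (fun x => (y x) ^ p) :=
      (Real.continuous_rpow_const (by positivity)).measurable.comp_aemeasurable hym
    exact ((h1.sub ((hym.sub aemeasurable_const).const_mul p)).sub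
      aemeasurable_const).mul continuous_gaussF.measurable.aemeasurable
  set L : ℝ≥0∞ := ∫⁻ x, ENNReal.ofReal (φ x) with hLdef
  have hentP_eq : entP p (fun x => |f x|) = ENNReal.ofReal (1 / (p * (p-1))) * L := rfl
  have hLne : L ≠ ⊤ := by
    intro hLtop
    rw [hentP_eq, hLtop, ENNReal.mul_top (by
      simp only [ne_eq, ENNReal.ofReal_eq_zero, not_le]
      positivity)] at hent
    exact absurd hent (lt_irrefl _)
  set E : ℝ := L.toReal with hEdef
  have hE0 : 0 ≤ E := ENNReal.toReal_nonneg
  have hφint : Integrable φ := by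
    refine ⟨hφm.aestronglyMeasurable, ?_⟩
    rw [hasFiniteIntegral_iff_ofReal (ae_of_all _ hφ0)]
    exact lt_of_le_of_ne le_top hLne
  have hφE : ∫ x, φ x = E := by
    have h := MeasureTheory.ofReal_integral_eq_lintegral_ofReal hφint (ae_of_all _ hφ0)
    rw [hEdef, hLdef, ← h, ENNReal.toReal_ofReal (integral_nonneg hφ0)]
  set m : ℝ := ∫ x, |f x| with hmdef
  have hm0 : 0 ≤ m := integral_nonneg fun x => abs_nonneg _
  have habs : Integrable (fun x => |f x|) := hf.abs
  -- the p-th power integrand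
  have hypG_eq : ∀ x, (y x) ^ p * G x = φ x + p * |f x| - (p-1) * G x := by
    intro x
    have h1 : y x * G x = |f x| := div_mul_cancel₀ _ (hGpos x).ne'
    rw [hφdef]
    simp only
    rw [← h1]
    ring
  have hypG_int : Integrable (fun x => (y x) ^ p * G x) := by
    have h : Integrable (fun x => φ x + p * |f x| - (p-1) * G x) :=
      (hφint.add (habs.const_mul p)).sub (hGint.const_mul (p-1))
    exact h.congr (ae_of_all _ fun x => (hypG_eq x).symm)
  set T : ℝ := ∫ x, (y x) ^ p * G x with hTdef
  have hT_eq : T = E + p * m - (p - 1) := by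
    rw [hTdef]
    have hI1 : Integrable (fun x => φ x + p * |f x|) := hφint.add (habs.const_mul p)
    have hI2 : Integrable (fun x => (p-1) * G x) := hGint.const_mul (p-1)
    have hI3 : Integrable (fun x => p * |f x|) := habs.const_mul p
    rw [integral_congr_ae (ae_of_all _ hypG_eq), integral_sub hI1 hI2,
      integral_add hφint hI3, integral_const_mul, integral_const_mul,
      hφE, hGone, ← hmdef]
    ring
  have hT0 : 0 ≤ T :=
    integral_nonneg fun x => mul_nonneg (Real.rpow_nonneg (hy0 x) p) (hGpos x).le
  have hS : ∫⁻ x, ENNReal.ofReal ((y x) ^ p * G x) = ENNReal.ofReal T :=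
    (MeasureTheory.ofReal_integral_eq_lintegral_ofReal hypG_int (ae_of_all _ fun x =>
      mul_nonneg (Real.rpow_nonneg (hy0 x) p) (hGpos x).le)).symm
  -- Hölder pieces
  set u : (Fin d → ℝ) → ℝ≥0∞ := fun x => ENNReal.ofReal (y x * G x ^ (1/p : ℝ)) with hudef
  set v : (Fin d → ℝ) → ℝ≥0∞ :=
    fun x => ENNReal.ofReal (Real.exp (lam * sqnorm x) * G x ^ (1/q : ℝ)) with hvdef
  set w : (Fin d → ℝ) → ℝ≥0∞ := fun x => ENNReal.ofReal (G x ^ (1/q : ℝ)) with hwdef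
  have hGq_cont : Continuous fun x => G x ^ (1/q : ℝ) :=
    continuous_gaussF.rpow_const fun x => Or.inr (by positivity)
  have hGp_cont : Continuous fun x => G x ^ (1/p : ℝ) :=
    continuous_gaussF.rpow_const fun x => Or.inr (by positivity)
  have hum : AEMeasurable u :=
    (hym.mul hGp_cont.measurable.aemeasurable).ennreal_ofReal
  have hvm : AEMeasurable v :=
    (((continuous_const.mul continuous_sqnorm).rexp.mul hGq_cont).measurable).aemeasurable.ennreal_ofReal
  have hwm : AEMeasurable w := hGq_cont.measurable.aemeasurable.ennreal_ofReal
  have hGsum : ∀ x, G x ^ (1/p : ℝ) * G x ^ (1/q : ℝ) = G x := by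
    intro x
    rw [← Real.rpow_add (hGpos x), hinv, Real.rpow_one]
  have hyG : ∀ x, y x * G x = |f x| := fun x => div_mul_cancel₀ _ (hGpos x).ne'
  have huv : ∀ x, ENNReal.ofReal (Real.exp (lam * sqnorm x) * |f x|) = u x * v x := by
    intro x
    rw [hudef, hvdef]
    simp only
    rw [← ENNReal.ofReal_mul (mul_nonneg (hy0 x) (Real.rpow_nonneg (hGpos x).le _))]
    congr 1
    linear_combination (-(Real.exp (lam * sqnorm x) * y x)) * hGsum x -
      Real.exp (lam * sqnorm x) * hyG x
  have hup : ∀ x, u x ^ p = ENNReal.ofReal ((y x) ^ p * G x) := by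
    intro x
    rw [hudef]
    simp only
    rw [ENNReal.ofReal_rpow_of_nonneg
      (mul_nonneg (hy0 x) (Real.rpow_nonneg (hGpos x).le _)) hp0.le]
    congr 1
    rw [Real.mul_rpow (hy0 x) (Real.rpow_nonneg (hGpos x).le _),
      ← Real.rpow_mul (hGpos x).le, one_div, inv_mul_cancel₀ hp0.ne', Real.rpow_one]
  have hvq : ∀ x, v x ^ q = ENNReal.ofReal (Real.exp ((q * lam) * sqnorm x) * G x) := by
    intro x
    rw [hvdef]
    simp only
    rw [ENNReal.ofReal_rpow_of_nonneg
      (mul_nonneg (Real.exp_pos _).le (Real.rpow_nonneg (hGpos x).le _)) hq0.le]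
    congr 1
    rw [Real.mul_rpow (Real.exp_pos _).le (Real.rpow_nonneg (hGpos x).le _),
      ← Real.exp_mul, ← Real.rpow_mul (hGpos x).le, one_div, inv_mul_cancel₀ hq0.ne',
      Real.rpow_one, show lam * sqnorm x * q = q * lam * sqnorm x by ring]
  have hwq : ∀ x, w x ^ q = ENNReal.ofReal (G x) := by
    intro x
    rw [hwdef]
    simp only
    rw [ENNReal.ofReal_rpow_of_nonneg (Real.rpow_nonneg (hGpos x).le _) hq0.le,
      ← Real.rpow_mul (hGpos x).le, one_div, inv_mul_cancel₀ hq0.ne', Real.rpow_one]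
  -- values of the integrals
  have hSu : ∫⁻ x, u x ^ p = ENNReal.ofReal T := by
    rw [lintegral_congr hup, hS]
  set Cq : ℝ := (1 - 2 * (q * lam)) ^ (-(d:ℝ)/2) with hCqdef
  have hCq0 : 0 < Cq := Real.rpow_pos_of_pos hbase0 _
  have hSv : ∫⁻ x, v x ^ q = ENNReal.ofReal Cq := by
    rw [lintegral_congr hvq,
      ← MeasureTheory.ofReal_integral_eq_lintegral_ofReal
        (integrable_exp_mul_sqnorm_gaussF hqlam_lt)
        (ae_of_all _ fun x => mul_nonneg (Real.exp_pos _).le (hGpos x).le),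
      integral_exp_mul_sqnorm_gaussF hqlam_lt]
  have hSw : ∫⁻ x, w x ^ q = 1 := by
    rw [lintegral_congr hwq,
      ← MeasureTheory.ofReal_integral_eq_lintegral_ofReal hGint
        (ae_of_all _ fun x => (hGpos x).le), hGone, ENNReal.ofReal_one]
  -- Jensen: m ≤ T^{1/p}
  have hmT : m ≤ T ^ (1/p : ℝ) := by
    have hfs : ∀ x, ENNReal.ofReal (|f x|) = u x * w x := by
      intro x
      rw [hudef, hwdef]
      simp only
      rw [← ENNReal.ofReal_mul (mul_nonneg (hy0 x) (Real.rpow_nonneg (hGpos x).le _))]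
      congr 1
      linear_combination (-(y x)) * hGsum x - hyG x
    have h0 : ENNReal.ofReal m = ∫⁻ x, u x * w x := by
      rw [hmdef, MeasureTheory.ofReal_integral_eq_lintegral_ofReal habs
        (ae_of_all _ fun x => abs_nonneg _)]
      exact lintegral_congr hfs
    have h1 : ∫⁻ x, u x * w x ≤ (∫⁻ x, u x ^ p) ^ (1/p) * (∫⁻ x, w x ^ q) ^ (1/q) := by
      have := ENNReal.lintegral_mul_le_Lp_mul_Lq volume hpq hum hwm
      simpa [Pi.mul_apply] using this
    rw [hSu, hSw, ENNReal.one_rpow, mul_one,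
      ENNReal.ofReal_rpow_of_nonneg hT0 (by positivity)] at h1
    exact (ENNReal.ofReal_le_ofReal_iff (Real.rpow_nonneg hT0 _)).mp (h0.le.trans h1)
  -- main Hölder estimate
  have hmain : (∫⁻ x, ENNReal.ofReal
      (Real.exp ((p - 1) * sqnorm x / (2 * (2 * p - 1))) * |f x|)) ≤
      ENNReal.ofReal (T ^ (1/p : ℝ) * Cq ^ (1/q : ℝ)) := by
    have hLHS : (∫⁻ x, ENNReal.ofReal
        (Real.exp ((p - 1) * sqnorm x / (2 * (2 * p - 1))) * |f x|)) =
        ∫⁻ x, u x * v x := by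
      refine lintegral_congr fun x => ?_
      rw [show (p - 1) * sqnorm x / (2 * (2 * p - 1)) = lam * sqnorm x by
        rw [hlamdef]; ring]
      exact huv x
    rw [hLHS]
    have h1 : ∫⁻ x, u x * v x ≤ (∫⁻ x, u x ^ p) ^ (1/p) * (∫⁻ x, v x ^ q) ^ (1/q) := by
      have := ENNReal.lintegral_mul_le_Lp_mul_Lq volume hpq hum hvm
      simpa [Pi.mul_apply] using this
    rw [hSu, hSv, ENNReal.ofReal_rpow_of_nonneg hT0 (by positivity),
      ENNReal.ofReal_rpow_of_nonneg hCq0.le (by positivity),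
      ← ENNReal.ofReal_mul (Real.rpow_nonneg hT0 _)] at h1
    exact h1
  -- the constant
  have hCq_pow : Cq ^ (1/q : ℝ) = ((2*p-1)/(p-1)) ^ ((d:ℝ) * (p-1) / (2*p)) := by
    have hb0 : (0:ℝ) < (p-1)/(2*p-1) := by positivity
    rw [hCqdef, hbase, ← Real.rpow_mul hb0.le,
      show -(d:ℝ)/2 * (1/q) = -((d:ℝ) * (p-1) / (2*p)) by
        rw [h1q]; field_simp; try ring,
      Real.rpow_neg hb0.le, ← Real.inv_rpow hb0.le, inv_div]
  -- entropy value
  have hE1 : p * (p - 1) * (entP p fun x => |f x|).toReal + 1 = E + 1 := by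
    rw [hentP_eq, ENNReal.toReal_mul, ENNReal.toReal_ofReal (by positivity), ← hEdef]
    field_simp
  constructor
  · -- general bound
    have hTK : T ≤ (2*p) ^ (p/(p-1)) * (E + 1) := key_arith hp1 hE0 hm0 hT_eq hT0 hmT
    have hKE0 : (0:ℝ) ≤ (2*p) ^ (p/(p-1)) * (E + 1) := by positivity
    have hstep : T ^ (1/p:ℝ) ≤ (2*p) ^ (1/(p-1):ℝ) * (E + 1) ^ (1/p:ℝ) := by
      calc T ^ (1/p:ℝ) ≤ ((2*p) ^ (p/(p-1)) * (E + 1)) ^ (1/p:ℝ) :=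
            Real.rpow_le_rpow hT0 hTK (by positivity)
        _ = (2*p) ^ (1/(p-1):ℝ) * (E + 1) ^ (1/p:ℝ) := by
            rw [Real.mul_rpow (by positivity) (by linarith),
              ← Real.rpow_mul (by linarith),
              show p/(p-1) * (1/p) = 1/(p-1) by field_simp]
    refine le_trans hmain (ENNReal.ofReal_le_ofReal ?_)
    rw [hE1]
    calc T ^ (1/p:ℝ) * Cq ^ (1/q:ℝ)
        ≤ ((2*p) ^ (1/(p-1):ℝ) * (E + 1) ^ (1/p:ℝ)) * Cq ^ (1/q:ℝ) :=
          mul_le_mul_of_nonneg_right hstep (Real.rpow_nonneg hCq0.le _)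
      _ = ((2*p-1)/(p-1)) ^ ((d:ℝ) * (p-1) / (2*p)) * (2*p) ^ (1/(p-1):ℝ) *
          (E + 1) ^ (1/p:ℝ) := by rw [hCq_pow]; ring
  · -- normalised bound
    intro hm1
    have hmm : m = 1 := hm1
    have hT1 : T = E + 1 := by rw [hT_eq, hmm]; ring
    refine le_trans hmain (ENNReal.ofReal_le_ofReal ?_)
    rw [hE1, ← hT1, hCq_pow]
    rw [mul_comm]

/-- Exponential moments are controlled by `p`-entropies. -/
theorem exp_moment_controlled_by_entropy (d : ℕ) (hd : 0 < d)
    (p : ℝ) (hp1 : 1 < p) (hp2 : p ≤ 2)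
    (f : (Fin d → ℝ) → ℝ) (hf : Integrable f)
    (hent : entP p (fun x => |f x|) < ⊤) :
    (∫⁻ x, ENNReal.ofReal
        (Real.exp ((p - 1) * sqnorm x / (2 * (2 * p - 1))) * |f x|)) ≤
      ENNReal.ofReal (((2 * p - 1) / (p - 1)) ^ ((d : ℝ) * (p - 1) / (2 * p)) *
        (2 * p) ^ (1 / (p - 1)) *
        (p * (p - 1) * (entP p (fun x => |f x|)).toReal + 1) ^ (1 / p)) ∧
    ((∫ x, |f x|) = 1 →
      (∫⁻ x, ENNReal.ofReal
          (Real.exp ((p - 1) * sqnorm x / (2 * (2 * p - 1))) * |f x|)) ≤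
        ENNReal.ofReal (((2 * p - 1) / (p - 1)) ^ ((d : ℝ) * (p - 1) / (2 * p)) *
          (p * (p - 1) * (entP p (fun x => |f x|)).toReal + 1) ^ (1 / p))) :=
  exp_moment_main d p hp1 hp2 f hf hent

end
end

section
/- Action of the Fokker–Planck operator on the first eigenspace: Let C ∈ ℝ^{d×d}, set D := (C+Cᵀ)/2, let f_∞(x) := (2π)^{−d/2} exp(−|x|²/2), and define ξ_i(x) := x_i f_∞(x) for i = 1,…,d. Then for every i and every x ∈ ℝ^d, the Fokker–Planck operator satisfies L ξ_i(x) := div( D ∇ξ_i(x) + C x ξ_i(x) ) = − Σ_{j=1}^d C_{ji} ξ_j(x); that is, the matrix representation of L with respect to the orthonormal basis (ξ_1,…,ξ_d) of V₁ ⊂ L²(ℝ^d, f_∞^{−1} dx) is −C. -/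
open MeasureTheory Matrix Real Filter Set
open scoped ENNReal

noncomputable section

open ContinuousLinearMap

lemma hasFDerivAt_sqnorm {d : ℕ} (x : Fin d → ℝ) :
    HasFDerivAt (sqnorm (d := d)) (∑ j, (2 * x j) • (proj j : (Fin d → ℝ) →L[ℝ] ℝ)) x := by
  apply HasFDerivAt.fun_sum
  intro j _
  have hj := (proj j : (Fin d → ℝ) →L[ℝ] ℝ).hasFDerivAt (x := x)
  have h := hj.fun_mul hj
  have heq : (fun y : Fin d → ℝ => y j ^ 2) = fun y => y j * y j := by
    funext y; ring
  rw [heq]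
  refine h.congr_fderiv (Eq.symm ?_)
  ext v
  simp
  ring

lemma hasFDerivAt_gaussF {d : ℕ} (x : Fin d → ℝ) :
    HasFDerivAt (gaussF d) (∑ j, (-(x j) * gaussF d x) • (proj j : (Fin d → ℝ) →L[ℝ] ℝ)) x := by
  have h1 : HasFDerivAt (fun y : Fin d → ℝ => -sqnorm y / 2)
      ((-(2:ℝ)⁻¹) • ∑ j, (2 * x j) • (proj j : (Fin d → ℝ) →L[ℝ] ℝ)) x := by
    have := (hasFDerivAt_sqnorm x).const_mul (-(2:ℝ)⁻¹)
    refine this.congr_of_eventuallyEq (Filter.Eventually.of_forall fun y => ?_)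
    ring
  have h2 := (h1.exp).const_mul ((2 * Real.pi) ^ (-(d : ℝ) / 2))
  refine h2.congr_fderiv (Eq.symm ?_)
  ext v
  simp only [gaussF, ContinuousLinearMap.sum_apply, ContinuousLinearMap.smul_apply,
    ContinuousLinearMap.proj_apply, smul_eq_mul, Finset.mul_sum]
  apply Finset.sum_congr rfl
  intro j _
  ring

/-- The Fokker–Planck operator acts on the first eigenspace `V₁` as `-C`:
`L ξ_i = div(D ∇ξ_i + C x ξ_i) = -∑ⱼ Cⱼᵢ ξⱼ`, where `ξ_i(x) = x_i f_∞(x)`. -/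
theorem FP_operator_on_V1 (d : ℕ) (hd : 0 < d) (C : Matrix (Fin d) (Fin d) ℝ) :
    ∀ i : Fin d, ∀ x : Fin d → ℝ,
      diverg (fun y =>
          symPart C *ᵥ grad (fun z => z i * gaussF d z) y + (y i * gaussF d y) • (C *ᵥ y)) x =
        -∑ j, C j i * (x j * gaussF d x) := by
  intro i x
  classical
  have hgrad : ∀ y : Fin d → ℝ, grad (fun z => z i * gaussF d z) y
      = fun j => (if i = j then 1 else 0) * gaussF d y - y i * (y j * gaussF d y) := by
    intro y
    funext j
    have hxi : HasFDerivAt (fun z : Fin d → ℝ => z i * gaussF d z)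
        ((y i) • (∑ l, (-(y l) * gaussF d y) • (proj l : (Fin d → ℝ) →L[ℝ] ℝ))
          + (gaussF d y) • (proj i : (Fin d → ℝ) →L[ℝ] ℝ)) y :=
      ((proj i : (Fin d → ℝ) →L[ℝ] ℝ).hasFDerivAt).mul (hasFDerivAt_gaussF y)
    rw [grad, hxi.fderiv]
    simp [Pi.single_apply, mul_ite, Finset.sum_ite_eq', Finset.mul_sum]
    by_cases h : i = j <;> simp [h] <;> ring
  have hF : ∀ k : Fin d, (fun y : Fin d → ℝ =>
      (symPart C *ᵥ grad (fun z => z i * gaussF d z) y + (y i * gaussF d y) • (C *ᵥ y)) k)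
      = fun y => symPart C k i * gaussF d y
          - y i * ((∑ j, symPart C k j * y j) * gaussF d y)
          + (y i * gaussF d y) * (∑ j, C k j * y j) := by
    intro k; funext y
    simp only [Pi.add_apply, Matrix.mulVec, dotProduct, Pi.smul_apply, smul_eq_mul, hgrad y]
    rw [show (∑ j, symPart C k j * ((if i = j then 1 else 0) * gaussF d y - y i * (y j * gaussF d y)))
        = (∑ j, (symPart C k j * (if i = j then 1 else 0) * gaussF d y
            - symPart C k j * (y i * (y j * gaussF d y)))) from
      Finset.sum_congr rfl fun j _ => by ring]
    rw [Finset.sum_sub_distrib]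
    simp [mul_ite, Finset.sum_ite_eq', Finset.mul_sum, Finset.sum_mul]
    exact Finset.sum_congr rfl fun j _ => by ring
  have hder : ∀ k : Fin d,
      fderiv ℝ (fun y : Fin d → ℝ => symPart C k i * gaussF d y
          - y i * ((∑ j, symPart C k j * y j) * gaussF d y)
          + (y i * gaussF d y) * (∑ j, C k j * y j)) x (Pi.single k 1)
      = symPart C k i * (-(x k) * gaussF d x)
        - (x i * ((∑ j, symPart C k j * x j) * (-(x k) * gaussF d x) + gaussF d x * symPart C k k)
           + (∑ j, symPart C k j * x j) * gaussF d x * (if i = k then 1 else 0))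
        + ((x i * gaussF d x) * C k k
           + (∑ j, C k j * x j) * (x i * (-(x k) * gaussF d x) + gaussF d x * (if i = k then 1 else 0))) := by
    intro k
    have hu : HasFDerivAt (fun y : Fin d → ℝ => y i)
        (proj i : (Fin d → ℝ) →L[ℝ] ℝ) x :=
      (proj i : (Fin d → ℝ) →L[ℝ] ℝ).hasFDerivAt
    have hv : HasFDerivAt (fun y : Fin d → ℝ => ∑ j, symPart C k j * y j)
        (∑ j, symPart C k j • (proj j : (Fin d → ℝ) →L[ℝ] ℝ)) x :=
      HasFDerivAt.fun_sum fun j _ => ((proj j : (Fin d → ℝ) →L[ℝ] ℝ).hasFDerivAt).const_mul _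
    have hw : HasFDerivAt (fun y : Fin d → ℝ => ∑ j, C k j * y j)
        (∑ j, C k j • (proj j : (Fin d → ℝ) →L[ℝ] ℝ)) x :=
      HasFDerivAt.fun_sum fun j _ => ((proj j : (Fin d → ℝ) →L[ℝ] ℝ).hasFDerivAt).const_mul _
    have hg := hasFDerivAt_gaussF x
    have h := (((hg.const_mul (symPart C k i))).fun_sub (hu.fun_mul (hv.fun_mul hg))).fun_add ((hu.fun_mul hg).fun_mul hw)
    rw [h.fderiv]
    simp [Pi.single_apply, mul_ite, Finset.sum_ite_eq', Finset.mul_sum]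
    by_cases h' : i = k
    · simp [h']; ring
    · simp [h']; ring
  unfold diverg
  simp only [hF]
  rw [Finset.sum_congr rfl fun k _ => hder k]
  set G := gaussF d x with hG
  have hsym : ∀ a b : Fin d, symPart C a b = 2⁻¹ * (C a b + C b a) := by
    intro a b
    simp [symPart, Matrix.add_apply, Matrix.transpose_apply]
  have expand : ∀ k : Fin d,
      (symPart C k i * (-x k * G) -
          (x i * ((∑ j, symPart C k j * x j) * (-x k * G) + G * symPart C k k) +
            (∑ j, symPart C k j * x j) * G * if i = k then 1 else 0) +
        (x i * G * C k k +
          (∑ j, C k j * x j) * (x i * (-x k * G) + G * if i = k then 1 else 0)))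
      = -(symPart C k i * x k * G)
        + x i * G * (x k * (∑ j, symPart C k j * x j) - x k * (∑ j, C k j * x j))
        + x i * (C k k - symPart C k k) * G
        + (if i = k then ((∑ j, C k j * x j) - (∑ j, symPart C k j * x j)) * G else 0) := by
    intro k
    by_cases h : i = k
    · simp only [h, if_true]; ring
    · simp only [h, if_false]; ring
  rw [Finset.sum_congr rfl fun k _ => expand k]
  rw [Finset.sum_add_distrib, Finset.sum_add_distrib, Finset.sum_add_distrib]
  have swap' : ∑ k, ∑ j, x k * (C j k * x j) = ∑ k, ∑ j, x k * (C k j * x j) := by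
    rw [Finset.sum_comm]
    exact Finset.sum_congr rfl fun k _ => Finset.sum_congr rfl fun j _ => by ring
  have key : ∑ k, x k * ∑ j, symPart C k j * x j = ∑ k, x k * ∑ j, C k j * x j := by
    simp only [Finset.mul_sum, hsym]
    have h1 : ∀ k j : Fin d, x k * (2⁻¹ * (C k j + C j k) * x j)
        = 2⁻¹ * (x k * (C k j * x j)) + 2⁻¹ * (x k * (C j k * x j)) := fun k j => by ring
    simp only [h1, Finset.sum_add_distrib]
    simp only [← Finset.mul_sum]
    have swap2 : ∑ k, x k * ∑ j, C j k * x j = ∑ k, x k * ∑ j, C k j * x j := by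
      simp only [Finset.mul_sum]
      exact swap'
    rw [swap2]
    ring
  have h2 : ∑ k, x i * G * (x k * (∑ j, symPart C k j * x j) - x k * (∑ j, C k j * x j)) = 0 := by
    rw [← Finset.mul_sum, Finset.sum_sub_distrib, key]
    simp
  have h3 : ∑ k, x i * (C k k - symPart C k k) * G = 0 :=
    Finset.sum_eq_zero fun k _ => by rw [hsym]; ring
  have h4 : (∑ k, if i = k then ((∑ j, C k j * x j) - (∑ j, symPart C k j * x j)) * G else 0)
      = ((∑ j, C i j * x j) - (∑ j, symPart C i j * x j)) * G := by
    simp [Finset.sum_ite_eq]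
  rw [h2, h3, h4, add_zero, add_zero]
  rw [show ((∑ j, C i j * x j) - ∑ j, symPart C i j * x j) * G
      = ∑ j, (C i j * x j * G - symPart C i j * x j * G) from by
    rw [sub_mul, Finset.sum_mul, Finset.sum_mul, Finset.sum_sub_distrib]]
  rw [← Finset.sum_add_distrib]
  rw [show -∑ j, C j i * (x j * G) = ∑ j, -(C j i * (x j * G)) from by
    rw [Finset.sum_neg_distrib]]
  exact Finset.sum_congr rfl fun j _ => by rw [hsym, hsym]; ring


end
end
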